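/- Let n, h, k be integers with 1 ≤ k ≤ h and n ≡ h (mod 2). Then (n+1) times the total number of k-down steps, summed over all generalized Dyck paths from (0,0) to (n,h), equals Σ_{j=0}^{k−1} (h+2j+3)·C(n+1, (n−2j−h−2)/2), where a summand is 0 whenever (n−2j−h−2)/2 is negative. -/

import Mathlib

/-!
Splitting a path by its last step gives, for `h ≥ 0`, the recurrences
`N(n+1,h) = N(n,h-1) + N(n,h+1)` for the number of generalized Dyck paths and
`T(n+1,h) = T(n,h-1) + T(n,h+1) + [h+1 = k] N(n,h+1)` for the total number of `k`-down steps.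
By induction on `n` they yield the ballot numbers `N(n,h) = C(n,m) - C(n,m-1)` for `n = 2m+h`,
and `T(n,h) = C(n,a) - C(n,a-k)` for `n = 2a+h+2` and `k ≤ h+1`. The theorem then follows by
telescoping, since `(n+1-2b) C(n+1,b) = (n+1) (C(n,b) - C(n,b-1))`.
-/

open Finset

attribute [local instance] Classical.propDecidable

/-- The height of the lattice path `p` (where `true` is a northeast step `(1,1)` and
`false` is a southeast step `(1,-1)`) after its first `i` steps. -/
def pathHeight {n : ℕ} (p : Fin n → Bool) (i : ℕ) : ℤ :=
  ∑ j ∈ Finset.univ.filter (fun j : Fin n => (j : ℕ) < i), (if p j then (1 : ℤ) else -1)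

/-- `p` is a generalized Dyck path from `(0,0)` to `(n,h)`: it ends at height `h`
and never goes below the x-axis. -/
def IsGDPath {n : ℕ} (h : ℤ) (p : Fin n → Bool) : Prop :=
  pathHeight p n = h ∧ ∀ i ≤ n, 0 ≤ pathHeight p i

/-- The set of generalized Dyck paths from `(0,0)` to `(n,h)`. -/
noncomputable def gdPaths (n : ℕ) (h : ℤ) : Finset (Fin n → Bool) :=
  Finset.univ.filter (IsGDPath h)

/-- The number of `k`-down steps of `p`, i.e. southeast steps from height `k` to `k-1`. -/
noncomputable def downSteps {n : ℕ} (k : ℤ) (p : Fin n → Bool) : ℕ :=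
  (Finset.univ.filter (fun i : Fin n => p i = false ∧ pathHeight p (i : ℕ) = k)).card

/-- Binomial coefficient on integers, `0` unless `0 ≤ b ≤ a`. -/
def binom (a b : ℤ) : ℤ :=
  if 0 ≤ b ∧ b ≤ a then (a.toNat.choose b.toNat : ℤ) else 0

lemma binom_of_neg {a b : ℤ} (hb : b < 0) : binom a b = 0 := by
  simp [binom, hb.not_ge]

@[norm_cast]
lemma binom_natCast (a b : ℕ) : binom a b = a.choose b := by
  unfold binom
  split_ifs with hb
  · simp
  · rw [Nat.choose_eq_zero_of_lt (by omega), Nat.cast_zero]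

lemma binom_zero_right {a : ℤ} (ha : 0 ≤ a) : binom a 0 = 1 := by
  simp [binom, ha]

lemma binom_symm (a b : ℤ) : binom a (a - b) = binom a b := by
  unfold binom
  by_cases hb : 0 ≤ b ∧ b ≤ a
  · rw [if_pos (by omega), if_pos hb]
    lift a to ℕ using by omega
    lift b to ℕ using hb.1
    rw [show (a : ℤ) - b = ((a - b : ℕ) : ℤ) by omega]
    simp only [Int.toNat_natCast, Nat.choose_symm (show b ≤ a by omega)]
  · rw [if_neg (by omega), if_neg hb]

lemma binom_succ_left (n : ℕ) (b : ℤ) :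
    binom (n + 1) b = binom n b + binom n (b - 1) := by
  rcases le_or_gt b 0 with hb | hb
  · rw [binom_of_neg (b := b - 1) (by omega), add_zero]
    rcases hb.lt_or_eq with hb | rfl
    · rw [binom_of_neg hb, binom_of_neg hb]
    · rw [binom_zero_right (by omega), binom_zero_right (by omega)]
  · obtain ⟨c, rfl⟩ : ∃ c : ℕ, b = c + 1 := ⟨(b - 1).toNat, by omega⟩
    rw [add_sub_cancel_right, add_comm (binom _ _)]
    exact_mod_cast Nat.choose_succ_succ' n c

lemma mul_binom_succ_left (n : ℕ) (b : ℤ) :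
    b * binom (n + 1) b = (n + 1) * binom n (b - 1) := by
  rcases le_or_gt b 0 with hb | hb
  · rw [binom_of_neg (b := b - 1) (by omega), mul_zero]
    rcases hb.lt_or_eq with hb | rfl
    · rw [binom_of_neg hb, mul_zero]
    · rw [zero_mul]
  · obtain ⟨c, rfl⟩ : ∃ c : ℕ, b = c + 1 := ⟨(b - 1).toNat, by omega⟩
    rw [add_sub_cancel_right, mul_comm]
    exact_mod_cast (Nat.add_one_mul_choose_eq n c).symm

lemma sub_two_mul_mul_binom_succ_left (n : ℕ) (b : ℤ) :
    (n + 1 - 2 * b) * binom (n + 1) b = (n + 1) * (binom n b - binom n (b - 1)) := by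
  linear_combination (n + 1 : ℤ) * binom_succ_left n b - 2 * mul_binom_succ_left n b

lemma sum_range_mul_binom_succ_left (n : ℕ) (a : ℤ) (k : ℕ) :
    ∑ j ∈ range k, (n + 1 - 2 * (a - j)) * binom (n + 1) (a - j) =
      (n + 1) * (binom n a - binom n (a - k)) := by
  simp only [sub_two_mul_mul_binom_succ_left, ← mul_sum]
  have := sum_range_sub' (fun j : ℕ => binom n (a - j)) k
  push_cast at this
  simp only [sub_sub] at this ⊢
  rw [this, sub_zero]

section Paths

variable {n : ℕ}

lemma pathHeight_snoc (q : Fin n → Bool) (b : Bool) (i : ℕ) :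
    pathHeight (Fin.snoc q b : Fin (n + 1) → Bool) i =
      pathHeight q i + if n < i then (if b then 1 else -1) else 0 := by
  simp only [pathHeight, sum_filter, Fin.sum_univ_castSucc, Fin.snoc_castSucc, Fin.snoc_last,
    Fin.val_castSucc, Fin.val_last]

lemma pathHeight_of_le (q : Fin n → Bool) {i : ℕ} (hi : n ≤ i) :
    pathHeight q i = pathHeight q n := by
  unfold pathHeight
  congr 1
  ext j
  simp only [mem_filter, mem_univ, true_and]
  omega

lemma isGDPath_snoc_iff {h : ℤ} (h0 : 0 ≤ h) (q : Fin n → Bool) (b : Bool) :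
    IsGDPath h (Fin.snoc q b : Fin (n + 1) → Bool) ↔ IsGDPath (h - if b then 1 else -1) q := by
  have hle : ∀ i ≤ n, pathHeight (Fin.snoc q b : Fin (n + 1) → Bool) i = pathHeight q i :=
    fun i hi => by simp [pathHeight_snoc, hi.not_gt]
  have htop : pathHeight (Fin.snoc q b : Fin (n + 1) → Bool) (n + 1) =
      pathHeight q n + if b then 1 else -1 := by
    simp [pathHeight_snoc, pathHeight_of_le q (Nat.le_succ n)]
  unfold IsGDPath
  constructor
  · rintro ⟨hend, hnonneg⟩
    refine ⟨by omega, fun i hi => hle i hi ▸ hnonneg i (by omega)⟩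
  · rintro ⟨hend, hnonneg⟩
    refine ⟨by omega, fun i hi => ?_⟩
    by_cases hin : i ≤ n
    · exact hle i hin ▸ hnonneg i hin
    · obtain rfl : i = n + 1 := by omega
      rw [htop, hend, sub_add_cancel]
      exact h0

lemma downSteps_snoc (q : Fin n → Bool) (b : Bool) (k : ℤ) :
    downSteps k (Fin.snoc q b : Fin (n + 1) → Bool) =
      downSteps k q + if b = false ∧ pathHeight q n = k then 1 else 0 := by
  simp only [downSteps, card_filter, Fin.sum_univ_castSucc, Fin.snoc_castSucc, Fin.snoc_last,
    Fin.val_castSucc, Fin.val_last, pathHeight_snoc]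
  simp [fun i : Fin n => i.isLt.not_gt]

end Paths

lemma mem_gdPaths {n : ℕ} {h : ℤ} {p : Fin n → Bool} : p ∈ gdPaths n h ↔ IsGDPath h p := by
  simp [gdPaths]

lemma gdPaths_of_neg {n : ℕ} {h : ℤ} (hh : h < 0) : gdPaths n h = ∅ := by
  refine eq_empty_of_forall_notMem fun p hp => ?_
  have := (mem_gdPaths.1 hp).2 n le_rfl
  rw [(mem_gdPaths.1 hp).1] at this
  omega

lemma sum_gdPaths_succ {M : Type*} [AddCommMonoid M] {n : ℕ} {h : ℤ} (h0 : 0 ≤ h)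
    (f : (Fin (n + 1) → Bool) → M) :
    ∑ p ∈ gdPaths (n + 1) h, f p =
      ∑ q ∈ gdPaths n (h - 1), f (Fin.snoc q true) +
        ∑ q ∈ gdPaths n (h + 1), f (Fin.snoc q false) := by
  have hlast : ∀ (b : Bool) (h' : ℤ), h' = (h - if b then 1 else -1) →
      ∑ q : Fin n → Bool, (if IsGDPath h (Fin.snoc q b : Fin (n + 1) → Bool)
        then f (Fin.snoc q b) else 0) = ∑ q ∈ gdPaths n h', f (Fin.snoc q b) := by
    rintro b _ rfl
    simp only [gdPaths, sum_filter, isGDPath_snoc_iff h0]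
  rw [gdPaths, sum_filter, ← (Fin.snocEquiv fun _ => Bool).sum_comp, Fintype.sum_prod_type,
    Fintype.sum_bool]
  exact congrArg₂ (· + ·) (hlast true _ (by simp)) (hlast false _ (by simp))

noncomputable def numGDPaths (n : ℕ) (h : ℤ) : ℕ := #(gdPaths n h)

noncomputable def totalDownSteps (n : ℕ) (h k : ℤ) : ℕ := ∑ p ∈ gdPaths n h, downSteps k p

lemma numGDPaths_of_neg {n : ℕ} {h : ℤ} (hh : h < 0) : numGDPaths n h = 0 := by
  rw [numGDPaths, gdPaths_of_neg hh, card_empty]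

lemma totalDownSteps_of_neg {n : ℕ} {h k : ℤ} (hh : h < 0) : totalDownSteps n h k = 0 := by
  rw [totalDownSteps, gdPaths_of_neg hh, sum_empty]

lemma numGDPaths_zero (h : ℤ) : numGDPaths 0 h = if h = 0 then 1 else 0 := by
  have hpath : ∀ p : Fin 0 → Bool, IsGDPath h p ↔ h = 0 := fun p => by
    simp [IsGDPath, pathHeight, @eq_comm _ 0 h]
  simp [numGDPaths, gdPaths, hpath, apply_ite card]

lemma totalDownSteps_zero (h k : ℤ) : totalDownSteps 0 h k = 0 := by
  simp [totalDownSteps, downSteps]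

lemma numGDPaths_succ (n : ℕ) {h : ℤ} (h0 : 0 ≤ h) :
    numGDPaths (n + 1) h = numGDPaths n (h - 1) + numGDPaths n (h + 1) := by
  simp only [numGDPaths, card_eq_sum_ones, sum_gdPaths_succ h0]

lemma totalDownSteps_succ (n : ℕ) {h : ℤ} (h0 : 0 ≤ h) (k : ℤ) :
    totalDownSteps (n + 1) h k = totalDownSteps n (h - 1) k + totalDownSteps n (h + 1) k +
      if h + 1 = k then numGDPaths n (h + 1) else 0 := by
  have hdown : ∀ q ∈ gdPaths n (h + 1),
      downSteps k (Fin.snoc q false : Fin (n + 1) → Bool) =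
        downSteps k q + if h + 1 = k then 1 else 0 := fun q hq => by
    simp [downSteps_snoc, (mem_gdPaths.1 hq).1]
  rw [totalDownSteps, sum_gdPaths_succ h0, sum_congr rfl hdown, sum_add_distrib]
  simp [downSteps_snoc, totalDownSteps, numGDPaths, add_assoc]

/- Allowing `h = -1` (no paths; the right-hand side vanishes by symmetry) makes the
recurrence step uniform in `h ≥ 0`. -/
lemma numGDPaths_eq (n : ℕ) {h m : ℤ} (hh : -1 ≤ h) (hn : n = 2 * m + h) :
    (numGDPaths n h : ℤ) = binom n m - binom n (m - 1) := by
  induction n generalizing h m with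
  | zero =>
    rw [numGDPaths_zero]
    split_ifs with h0
    · obtain rfl : m = 0 := by omega
      norm_num [binom]
    · rw [binom_of_neg (by omega), binom_of_neg (by omega), Nat.cast_zero, sub_zero]
  | succ n ih =>
    rcases hh.eq_or_lt with rfl | hh
    · rw [numGDPaths_of_neg (by norm_num), Nat.cast_zero, ← binom_symm _ m, eq_comm, sub_eq_zero]
      congr 1
      omega
    · rw [numGDPaths_succ n (by omega), Nat.cast_add, ih (m := m) (by omega) (by omega),
        ih (m := m - 1) (by omega) (by omega), Nat.cast_succ, binom_succ_left, binom_succ_left]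
      ring

lemma totalDownSteps_eq (n : ℕ) {h k a : ℤ} (hh : -1 ≤ h) (hk : 0 ≤ k) (hn : n = 2 * a + h + 2) :
    (totalDownSteps n h k : ℤ) = binom n (a - max (k - 1 - h) 0) - binom n (a - k) := by
  induction n generalizing h a with
  | zero =>
    rw [totalDownSteps_zero, binom_of_neg (by omega), binom_of_neg (by omega)]
    rfl
  | succ n ih =>
    rcases hh.eq_or_lt with rfl | hh
    · rw [totalDownSteps_of_neg (by norm_num), Nat.cast_zero, eq_comm, sub_eq_zero]
      congr 2
      omega
    have ih₁ := ih (h := h - 1) (a := a) (by omega) (by omega)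
    have ih₂ := ih (h := h + 1) (a := a - 1) (by omega) (by omega)
    rw [totalDownSteps_succ n (by omega), Nat.cast_add, Nat.cast_add, Nat.cast_succ,
      binom_succ_left, binom_succ_left]
    rcases lt_trichotomy (h + 1) k with hlt | rfl | hgt
    · rw [if_neg hlt.ne, Nat.cast_zero, add_zero, ih₁, ih₂,
        show a - max (k - 1 - (h - 1)) 0 = a - max (k - 1 - h) 0 - 1 by omega,
        show a - 1 - max (k - 1 - (h + 1)) 0 = a - max (k - 1 - h) 0 by omega]
      ring_nf
    · rw [if_pos rfl, ih₁, ih₂, numGDPaths_eq n (m := a) (by omega) (by omega),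
        show a - max (h + 1 - 1 - (h - 1)) 0 = a - 1 by omega,
        show a - 1 - max (h + 1 - 1 - (h + 1)) 0 = a - 1 by omega,
        show max (h + 1 - 1 - h) 0 = 0 by omega]
      ring_nf
    · rw [if_neg hgt.ne', Nat.cast_zero, add_zero, ih₁, ih₂,
        show max (k - 1 - (h - 1)) 0 = 0 by omega, show max (k - 1 - (h + 1)) 0 = 0 by omega,
        show max (k - 1 - h) 0 = 0 by omega]
      ring_nf

theorem stmt13_general (n h k : ℕ) (hkh : k ≤ h) (hmod : n % 2 = h % 2) :
    ((n : ℤ) + 1) * (∑ p ∈ gdPaths n (h : ℤ), downSteps (k : ℤ) p : ℕ) =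
      ∑ j ∈ Finset.range k,
        ((h : ℤ) + 2 * j + 3) * binom ((n : ℤ) + 1) (((n : ℤ) - 2 * j - h - 2) / 2) := by
  obtain ⟨a, hna⟩ : ∃ a : ℤ, (n : ℤ) = 2 * a + h + 2 := ⟨(n - h - 2) / 2, by omega⟩
  have hsummand : ∀ j ∈ range k,
      ((h : ℤ) + 2 * j + 3) * binom ((n : ℤ) + 1) (((n : ℤ) - 2 * j - h - 2) / 2) =
        (n + 1 - 2 * (a - j)) * binom (n + 1) (a - j) := fun j _ => by
    rw [show ((n : ℤ) - 2 * j - h - 2) / 2 = a - j by omega]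
    congr 1
    omega
  change _ * (totalDownSteps n h k : ℤ) = _
  rw [sum_congr rfl hsummand, sum_range_mul_binom_succ_left,
    totalDownSteps_eq n (by omega) (by omega) hna, max_eq_right (by omega), sub_zero]

/-- For 1 ≤ k ≤ h, (n+1) times the total number of k-down steps over all generalized Dyck
paths from (0,0) to (n,h) equals Σ_{j=0}^{k−1} (h+2j+3)·C(n+1, (n−2j−h−2)/2). -/
theorem stmt13 (n h k : ℕ) (hk : 1 ≤ k) (hkh : k ≤ h) (hmod : n % 2 = h % 2) :
    ((n : ℤ) + 1) * (∑ p ∈ gdPaths n (h : ℤ), downSteps (k : ℤ) p : ℕ) =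
      ∑ j ∈ Finset.range k,
        ((h : ℤ) + 2 * j + 3) * binom ((n : ℤ) + 1) (((n : ℤ) - 2 * j - h - 2) / 2) :=
  stmt13_general n h k hkh hmod
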